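/- arXiv:0909.3747 — 4 statements merged into one kernel-verified Lean document; each statement's English description precedes it below -/
import Mathlib

section
/- Every function F : (ℤ/3ℤ)² → ℤ/3ℤ that is zero at all points except possibly one point (a singular function) can be represented as F(x₁,x₂) = f(g₁(x₁) + g₂(x₂)) for some unary functions f, g₁, g₂ : ℤ/3ℤ → ℤ/3ℤ, where + is addition in ℤ/3ℤ. -/
/-!
Put `g₁ = c·[x₁ = a]` and `g₂ = c·[x₂ = b]` for an element `c` with `c + c ∉ {0, c}`
(in `ℤ/3ℤ`, `c = 1`). Then `g₁ x₁ + g₂ x₂ = c + c` exactly at the point `(a, b)`, so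
`f = F (a, b)·[· = c + c]` does the job.
-/

theorem exists_eq_comp_add_of_forall_ne_eq_zero {α β M R : Type*} [AddZeroClass M] [Zero R]
    {c : M} (hc : c + c ≠ c) (hc₀ : c + c ≠ 0) (F : α × β → R) (p : α × β)
    (hF : ∀ q, q ≠ p → F q = 0) :
    ∃ (f : M → R) (g₁ : α → M) (g₂ : β → M), ∀ x₁ x₂, F (x₁, x₂) = f (g₁ x₁ + g₂ x₂) := by
  classical
  set g₁ : α → M := fun x => if x = p.1 then c else 0
  set g₂ : β → M := fun x => if x = p.2 then c else 0
  have hsum : ∀ x₁ x₂, g₁ x₁ + g₂ x₂ = c + c ↔ (x₁, x₂) = p := by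
    intro x₁ x₂
    by_cases h₁ : x₁ = p.1 <;> by_cases h₂ : x₂ = p.2 <;>
      simp [g₁, g₂, h₁, h₂, Prod.ext_iff, hc.symm, hc₀.symm]
  refine ⟨fun s => if s = c + c then F p else 0, g₁, g₂, fun x₁ x₂ => ?_⟩
  by_cases hx : (x₁, x₂) = p
  · simp [hsum, hx]
  · simp [hsum, hx, hF _ hx]

/-- Every singular function F : (ℤ/3ℤ)² → ℤ/3ℤ (zero except possibly at one point)
has a one-term representation f(g₁(x₁)+g₂(x₂)). -/
theorem stmt_3 (F : ZMod 3 × ZMod 3 → ZMod 3)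
    (hF : ∃ p : ZMod 3 × ZMod 3, ∀ q : ZMod 3 × ZMod 3, q ≠ p → F q = 0) :
    ∃ f g₁ g₂ : ZMod 3 → ZMod 3, ∀ x₁ x₂ : ZMod 3, F (x₁, x₂) = f (g₁ x₁ + g₂ x₂) := by
  obtain ⟨p, hp⟩ := hF
  exact exists_eq_comp_add_of_forall_ne_eq_zero (c := (1 : ZMod 3)) (by decide) (by decide) F p hp
end

section
/- Every function F : (ℤ/3ℤ)² → ℤ/3ℤ can be represented as a sum F(x₁,x₂) = Σᵢ₌₁^L fᵢ(gᵢ₁(x₁) + gᵢ₂(x₂)) with L ≤ 9, where all fᵢ, gᵢ₁, gᵢ₂ : ℤ/3ℤ → ℤ/3ℤ are unary functions and sums are taken in ℤ/3ℤ. -/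
/-! Index the terms by the points `p = (a, b)` of the domain. With `g₁ = e · 1_{a}` and
`g₂ = e · 1_{b}`, the inner sum takes the value `e + e` exactly at `(a, b)`, since `e` and `e + e`
are nonzero; hence `f` sending `e + e` to `F (a, b)` and everything else to `0` makes the `p`-th
term the indicator of `(a, b)` scaled by `F (a, b)`. For `ℤ/3ℤ` take `e = 1`: there are `9` points. -/

section Superposition

variable {X Y G M : Type*} [AddGroup G]

theorem ite_add_ite_eq_add_self_iff [DecidableEq X] [DecidableEq Y] {e : G} (he : e ≠ 0)
    (he₂ : e + e ≠ 0) (a x : X) (b y : Y) :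
    (if x = a then e else 0) + (if y = b then e else 0) = e + e ↔ x = a ∧ y = b := by
  split_ifs <;> simp_all [he₂.symm]

variable [Fintype X] [Fintype Y] [AddCommMonoid M]

theorem exists_superposition_prod {e : G} (he : e ≠ 0) (he₂ : e + e ≠ 0) (F : X × Y → M) :
    ∃ (f : X × Y → G → M) (g₁ : X × Y → X → G) (g₂ : X × Y → Y → G),
      ∀ x y, F (x, y) = ∑ p, f p (g₁ p x + g₂ p y) := by
  classical
  refine ⟨fun p t => if t = e + e then F p else 0, fun p x => if x = p.1 then e else 0,
    fun p y => if y = p.2 then e else 0, fun x y => ?_⟩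
  have hpoint (p : X × Y) : x = p.1 ∧ y = p.2 ↔ (x, y) = p := by rw [Prod.ext_iff]
  simp only [ite_add_ite_eq_add_self_iff he he₂, hpoint]
  rw [Finset.sum_ite_eq, if_pos (Finset.mem_univ _)]

theorem exists_superposition_fin_card {e : G} (he : e ≠ 0) (he₂ : e + e ≠ 0) (F : X × Y → M) :
    ∃ (f : Fin (Fintype.card (X × Y)) → G → M) (g₁ : Fin (Fintype.card (X × Y)) → X → G)
      (g₂ : Fin (Fintype.card (X × Y)) → Y → G), ∀ x y, F (x, y) = ∑ i, f i (g₁ i x + g₂ i y) := by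
  obtain ⟨f, g₁, g₂, hF⟩ := exists_superposition_prod he he₂ F
  let σ := (Fintype.equivFin (X × Y)).symm
  exact ⟨f ∘ σ, g₁ ∘ σ, g₂ ∘ σ, fun x y => (hF x y).trans (σ.sum_comp _).symm⟩

end Superposition

/-- Every binary function on ℤ/3ℤ is a sum of at most 9 terms fᵢ(gᵢ₁(x₁)+gᵢ₂(x₂)). -/
theorem stmt_4 (F : ZMod 3 × ZMod 3 → ZMod 3) :
    ∃ L : ℕ, L ≤ 9 ∧ ∃ f g₁ g₂ : Fin L → (ZMod 3 → ZMod 3),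
      ∀ x₁ x₂ : ZMod 3, F (x₁, x₂) = ∑ i : Fin L, f i (g₁ i x₁ + g₂ i x₂) := by
  have hcard : Fintype.card (ZMod 3 × ZMod 3) = 9 := by simp [ZMod.card]
  exact ⟨_, hcard.le, exists_superposition_fin_card (e := (1 : ZMod 3)) one_ne_zero (by decide) F⟩
end

section
/- For every n ≥ 3 and every M ≥ 1, every function F : (ℤ/nℤ)^M → ℤ/nℤ can be represented as an iterated superposition built only from unary functions ℤ/nℤ → ℤ/nℤ and the binary addition of ℤ/nℤ. -/
/-- The class of functions (ℤ/nℤ)^M → ℤ/nℤ representable by superposition of unary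
functions and addition: contains projections, closed under postcomposition with unary
functions, closed under pointwise addition. -/
inductive UnaryAddRepr (n M : ℕ) : ((Fin M → ZMod n) → ZMod n) → Prop
  | proj (i : Fin M) : UnaryAddRepr n M (fun x => x i)
  | comp (u : ZMod n → ZMod n) {F : (Fin M → ZMod n) → ZMod n} :
      UnaryAddRepr n M F → UnaryAddRepr n M (fun x => u (F x))
  | add {F G : (Fin M → ZMod n) → ZMod n} :
      UnaryAddRepr n M F → UnaryAddRepr n M G → UnaryAddRepr n M (fun x => F x + G x)

section aux
open Classical in
lemma repr_congr {n M : ℕ} {F G : (Fin M → ZMod n) → ZMod n} (h : ∀ x, F x = G x)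
    (hF : UnaryAddRepr n M F) : UnaryAddRepr n M G := by
  have : F = G := funext h
  rwa [this] at hF

lemma repr_const {n M : ℕ} (hM : 1 ≤ M) (c : ZMod n) :
    UnaryAddRepr n M (fun _ => c) := by
  have := UnaryAddRepr.comp (fun _ => c) (UnaryAddRepr.proj (n := n) ⟨0, hM⟩)
  exact this

lemma repr_sum {n M : ℕ} (hM : 1 ≤ M) {ι : Type*} (s : Finset ι)
    (f : ι → (Fin M → ZMod n) → ZMod n) (h : ∀ i ∈ s, UnaryAddRepr n M (f i)) :
    UnaryAddRepr n M (fun x => ∑ i ∈ s, f i x) := by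
  classical
  induction s using Finset.induction with
  | empty => simpa using repr_const hM 0
  | @insert a s hi ih =>
    refine repr_congr (F := fun x => f a x + ∑ i ∈ s, f i x) ?_ ?_
    · intro x; rw [Finset.sum_insert hi]
    · exact (h a (Finset.mem_insert_self a s)).add
        (ih fun i his => h i (Finset.mem_insert_of_mem his))

lemma two_lemmas {n : ℕ} (hn : 3 ≤ n) :
    (0 : ZMod n) ≠ 2 ∧ (1 : ZMod n) ≠ 2 := by
  have h0 : ZMod.val (0 : ZMod n) = 0 := by
    have : NeZero n := ⟨by omega⟩
    exact ZMod.val_zero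
  have h1 : ZMod.val (1 : ZMod n) = 1 := ZMod.val_one_eq_one_mod n ▸ Nat.mod_eq_of_lt (by omega)
  have h2 : ZMod.val (2 : ZMod n) = 2 := by
    have : ((2 : ℕ) : ZMod n) = (2 : ZMod n) := by push_cast; ring
    rw [← this, ZMod.val_natCast, Nat.mod_eq_of_lt (by omega)]
  refine ⟨fun h => ?_, fun h => ?_⟩
  · rw [h] at h0; omega
  · rw [h] at h1; omega

open Classical in
lemma repr_indicator {n M : ℕ} (hn : 3 ≤ n) (hM : 1 ≤ M) (a : Fin M → ZMod n)
    (s : Finset (Fin M)) :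
    UnaryAddRepr n M (fun x => if ∀ i ∈ s, x i = a i then (1 : ZMod n) else 0) := by
  induction s using Finset.induction with
  | empty => exact repr_congr (fun x => by simp) (repr_const hM 1)
  | @insert j s hi ih =>
    set g : ZMod n → ZMod n := fun t => if t = 2 then 1 else 0 with hg
    have he : UnaryAddRepr n M (fun x => if x j = a j then (1:ZMod n) else 0) :=
      UnaryAddRepr.comp (fun t => if t = a j then 1 else 0) (UnaryAddRepr.proj j)
    have hsum := (ih.add he).comp g
    refine repr_congr (fun x => ?_) hsum
    obtain ⟨h02, h12⟩ := two_lemmas hn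
    simp only [hg, Finset.forall_mem_insert]
    by_cases h1 : ∀ i ∈ s, x i = a i <;> by_cases h2 : x j = a j
    · rw [if_pos h1, if_pos h2, if_pos (show (1:ZMod n)+1 = 2 by ring), if_pos ⟨h2, h1⟩]
    · rw [if_pos h1, if_neg h2, if_neg (show ¬(1:ZMod n)+0 = 2 by simpa using h12),
        if_neg (fun h => h2 h.1)]
    · rw [if_neg h1, if_pos h2, if_neg (show ¬(0:ZMod n)+1 = 2 by
        simpa [add_comm] using h12), if_neg (fun h => h1 h.2)]
    · rw [if_neg h1, if_neg h2, if_neg (show ¬(0:ZMod n)+0 = 2 by simpa using h02),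
        if_neg (fun h => h1 h.2)]
end aux


/-- For n ≥ 3 and M ≥ 1, every function (ℤ/nℤ)^M → ℤ/nℤ is representable by
superposition of unary functions and addition. -/
theorem stmt_6 (n M : ℕ) (hn : 3 ≤ n) (hM : 1 ≤ M)
    (F : (Fin M → ZMod n) → ZMod n) : UnaryAddRepr n M F := by
  classical
  haveI : NeZero n := ⟨by omega⟩
  haveI : Fact (1 < n) := ⟨by omega⟩
  have key : ∀ x, F x = ∑ a : Fin M → ZMod n,
      (fun t => if t = (1:ZMod n) then F a else 0)
        ((fun x => if ∀ i ∈ (Finset.univ : Finset (Fin M)), x i = a i then (1:ZMod n) else 0) x) := by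
    intro x
    rw [Finset.sum_eq_single x]
    · simp
    · intro b _ hb
      have hne : ¬ ∀ i, x i = b i := fun h => hb (funext fun i => (h i).symm)
      simp [hne, (zero_ne_one (α := ZMod n))]
    · simp
  refine repr_congr (fun x => (key x).symm) ?_
  exact repr_sum hM _ _ fun a _ =>
    UnaryAddRepr.comp (fun t => if t = (1:ZMod n) then F a else 0)
      (repr_indicator hn hM a Finset.univ)
end

section
/- Every function F : (ℤ/3ℤ)³ → ℤ/3ℤ can be represented as Σᵢ₌₁^{27} fᵢ( hᵢ( gᵢ₁(x₁) + gᵢ₂(x₂) ) + gᵢ₃(x₃) ) for some unary functions fᵢ, hᵢ, gᵢⱼ : ℤ/3ℤ → ℤ/3ℤ. -/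
lemma key_iff : ∀ a b c x₁ x₂ x₃ : ZMod 3,
    (((if ((if x₁ = a then (0:ZMod 3) else 1) + (if x₂ = b then 0 else 1)) = 0
        then (0:ZMod 3) else 1) + (if x₃ = c then 0 else 1)) = 0)
      ↔ (x₁ = a ∧ x₂ = b ∧ x₃ = c) := by decide

/-- Every ternary function on ℤ/3ℤ admits a nested superposition representation
with 27 terms fᵢ(hᵢ(gᵢ₁(x₁)+gᵢ₂(x₂))+gᵢ₃(x₃)). -/
theorem stmt_8 (F : ZMod 3 × ZMod 3 × ZMod 3 → ZMod 3) :
    ∃ f h g₁ g₂ g₃ : Fin 27 → (ZMod 3 → ZMod 3),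
      ∀ x₁ x₂ x₃ : ZMod 3,
        F (x₁, x₂, x₃) = ∑ i : Fin 27, f i (h i (g₁ i x₁ + g₂ i x₂) + g₃ i x₃) := by
  have hcard : Fintype.card (ZMod 3 × ZMod 3 × ZMod 3) = 27 := by decide
  let e : Fin 27 ≃ ZMod 3 × ZMod 3 × ZMod 3 :=
    (Fintype.equivFinOfCardEq hcard).symm
  refine ⟨fun i y => if y = 0 then F (e i) else 0,
         fun _ y => if y = 0 then 0 else 1,
         fun i x => if x = (e i).1 then 0 else 1,
         fun i x => if x = (e i).2.1 then 0 else 1,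
         fun i x => if x = (e i).2.2 then 0 else 1, ?_⟩
  intro x₁ x₂ x₃
  have hstep : ∀ i : Fin 27,
      (if ((if ((if x₁ = (e i).1 then (0:ZMod 3) else 1) +
              (if x₂ = (e i).2.1 then 0 else 1)) = 0 then (0:ZMod 3) else 1) +
          (if x₃ = (e i).2.2 then 0 else 1)) = 0 then F (e i) else 0)
        = (if (x₁, x₂, x₃) = e i then F (e i) else 0) := by
    intro i
    by_cases hp : (x₁, x₂, x₃) = e i
    · have h1 : x₁ = (e i).1 ∧ x₂ = (e i).2.1 ∧ x₃ = (e i).2.2 := by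
        rw [← hp]; exact ⟨rfl, rfl, rfl⟩
      rw [if_pos ((key_iff _ _ _ _ _ _).mpr h1), if_pos hp]
    · have h1 : ¬(x₁ = (e i).1 ∧ x₂ = (e i).2.1 ∧ x₃ = (e i).2.2) := by
        intro ⟨ha, hb, hc⟩
        exact hp (by rw [ha, hb, hc])
      rw [if_neg (fun hz => h1 ((key_iff _ _ _ _ _ _).mp hz)), if_neg hp]
  calc F (x₁, x₂, x₃)
      = ∑ p : ZMod 3 × ZMod 3 × ZMod 3, if (x₁, x₂, x₃) = p then F p else 0 := by
        rw [Finset.sum_ite_eq]; simp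
    _ = ∑ i : Fin 27, if (x₁, x₂, x₃) = e i then F (e i) else 0 :=
        (Equiv.sum_comp e (fun p => if (x₁, x₂, x₃) = p then F p else 0)).symm
    _ = _ := by
        refine Finset.sum_congr rfl fun i _ => ?_
        exact (hstep i).symm
end
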